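/- Let (E_i, A_i, δ_i, □_i, P_i) be as in the standing setting, and assume that δ_i∘δ_{i+1} = 0, δ_i∘P_i = 0, and A_{i+1}∘A_i = 0 for all i ∈ ℤ. Then for all i: □_{i+1}∘A_i = A_i∘□_i, P_{i+1}∘A_i = A_i∘P_i, δ_{i+1}∘A_i∘P_i = 0, and im(P_i) = ker(□_i) = ker(δ_i) ∩ ker(δ_{i+1}∘A_i). -/

import Mathlib

/-- `P` is the spectral projection of `B` onto the generalized zero eigenspace, i.e. the
projection onto the generalized eigenspace for the eigenvalue `0` along the sum of the generalized
eigenspaces for the nonzero eigenvalues. -/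
def IsGenZeroProj {V : Type*} [AddCommGroup V] [Module ℂ V] (B P : V →ₗ[ℂ] V) : Prop :=
  (∀ v ∈ Module.End.maxGenEigenspace B 0, P v = v) ∧
  (∀ μ : ℂ, μ ≠ 0 → ∀ v ∈ Module.End.maxGenEigenspace B μ, P v = 0)

/-- The operator `□_{i+1} = A_i ∘ δ_{i+1} + δ_{i+2} ∘ A_{i+1} : E_{i+1} → E_{i+1}` of the standing
setting.  Here `A i : E i → E (i+1)` is the `i`-th operator of the sequence and
`δ i : E (i+1) → E i` denotes the codifferential `δ_{i+1}` of the paper. -/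
noncomputable def Box (E : ℤ → Type*) [∀ i, AddCommGroup (E i)] [∀ i, Module ℂ (E i)]
    (A : ∀ i : ℤ, E i →ₗ[ℂ] E (i + 1)) (δ : ∀ i : ℤ, E (i + 1) →ₗ[ℂ] E i) (i : ℤ) :
    E (i + 1) →ₗ[ℂ] E (i + 1) :=
  A i ∘ₗ δ i + δ (i + 1) ∘ₗ A (i + 1)

/-- In the standing setting, if `δ_i∘δ_{i+1} = 0`, `δ_i∘P_i = 0` and
`A_{i+1}∘A_i = 0` for all `i`, then for all `i`: `□_{i+1}∘A_i = A_i∘□_i`, `P_{i+1}∘A_i = A_i∘P_i`,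
`δ_{i+1}∘A_i∘P_i = 0`, and `im(P_i) = ker(□_i) = ker(δ_i) ∩ ker(δ_{i+1}∘A_i)`.

(Indexing: the statement for all `i ∈ ℤ` is expressed by quantifying over `k ∈ ℤ`, with
`E_{k+1} = E (k+1)`, `A_{k+1} = A (k+1)`, `δ_{k+1} = δ k`, `□_{k+1} = Box E A δ k`,
`P_{k+1} = P k`.) -/
theorem statement4 (E : ℤ → Type*) [∀ i, AddCommGroup (E i)] [∀ i, Module ℂ (E i)]
    [∀ i, FiniteDimensional ℂ (E i)]
    (A : ∀ i : ℤ, E i →ₗ[ℂ] E (i + 1)) (δ : ∀ i : ℤ, E (i + 1) →ₗ[ℂ] E i)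
    (P : ∀ i : ℤ, E (i + 1) →ₗ[ℂ] E (i + 1))
    (hP : ∀ i : ℤ, IsGenZeroProj (Box E A δ i) (P i))
    (hδδ : ∀ i : ℤ, δ i ∘ₗ δ (i + 1) = 0)
    (hδP : ∀ i : ℤ, δ i ∘ₗ P i = 0)
    (hAA : ∀ i : ℤ, A (i + 1) ∘ₗ A i = 0) :
    ∀ k : ℤ,
      Box E A δ (k + 1) ∘ₗ A (k + 1) = A (k + 1) ∘ₗ Box E A δ k ∧
      P (k + 1) ∘ₗ A (k + 1) = A (k + 1) ∘ₗ P k ∧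
      δ (k + 1) ∘ₗ A (k + 1) ∘ₗ P k = 0 ∧
      LinearMap.range (P k) = LinearMap.ker (Box E A δ k) ∧
      LinearMap.ker (Box E A δ k)
        = LinearMap.ker (δ k) ⊓ LinearMap.ker (δ (k + 1) ∘ₗ A (k + 1)) := by
  intro k
  have hAA' : ∀ (i : ℤ) (x : E i), A (i + 1) (A i x) = 0 := by
    intro i x
    have := LinearMap.ext_iff.mp (hAA i) x
    simpa using this
  have hδP' : ∀ (i : ℤ) (x : E (i + 1)), δ i (P i x) = 0 := by
    intro i x
    have := LinearMap.ext_iff.mp (hδP i) x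
    simpa using this
  -- Part 1
  have h1 : Box E A δ (k + 1) ∘ₗ A (k + 1) = A (k + 1) ∘ₗ Box E A δ k := by
    ext v
    simp only [Box, LinearMap.comp_apply, LinearMap.add_apply, map_add, hAA' (k + 1),
      hAA' k, map_zero, add_zero, zero_add]
  have h1' : ∀ x : E (k + 1),
      Box E A δ (k + 1) (A (k + 1) x) = A (k + 1) (Box E A δ k x) :=
    fun x => LinearMap.ext_iff.mp h1 x
  -- commutation with powers of (Box - μ • 1)
  have hpow : ∀ (μ : ℂ) (n : ℕ) (x : E (k + 1)),
      ((Box E A δ (k + 1) - μ • 1) ^ n) (A (k + 1) x)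
        = A (k + 1) (((Box E A δ k - μ • 1) ^ n) x) := by
    intro μ n
    induction n with
    | zero => intro x; simp
    | succ n ih =>
      intro x
      have hstep : (Box E A δ (k + 1) - μ • 1) (A (k + 1) x)
          = A (k + 1) ((Box E A δ k - μ • 1) x) := by
        simp only [LinearMap.sub_apply, LinearMap.smul_apply, Module.End.one_apply,
          h1' x, map_sub, map_smul]
      rw [pow_succ, Module.End.mul_apply, hstep, ih]
      rw [← Module.End.mul_apply, ← pow_succ]
  -- A maps generalized eigenspaces to generalized eigenspaces
  have hmap : ∀ (μ : ℂ) (x : E (k + 1)), x ∈ Module.End.maxGenEigenspace (Box E A δ k) μ →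
      A (k + 1) x ∈ Module.End.maxGenEigenspace (Box E A δ (k + 1)) μ := by
    intro μ x hx
    rw [Module.End.mem_maxGenEigenspace] at hx ⊢
    obtain ⟨n, hn⟩ := hx
    exact ⟨n, by rw [hpow μ n x, hn, map_zero]⟩
  -- Part 2
  have h2 : P (k + 1) ∘ₗ A (k + 1) = A (k + 1) ∘ₗ P k := by
    ext v
    simp only [LinearMap.comp_apply]
    have hv : v ∈ ⨆ μ : ℂ, Module.End.maxGenEigenspace (Box E A δ k) μ := by
      rw [Module.End.iSup_maxGenEigenspace_eq_top]; trivial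
    refine Submodule.iSup_induction (motive := fun v => P (k + 1) (A (k + 1) v) = A (k + 1) (P k v))
      _ hv ?_ (by simp) ?_
    · intro μ x hx
      rcases eq_or_ne μ 0 with rfl | hμ
      · rw [(hP k).1 x hx, (hP (k + 1)).1 _ (hmap 0 x hx)]
      · rw [(hP k).2 μ hμ x hx, (hP (k + 1)).2 μ hμ _ (hmap μ x hx), map_zero]
    · intro x y hx hy
      simp [map_add, hx, hy]
  have h2' : ∀ x : E (k + 1), P (k + 1) (A (k + 1) x) = A (k + 1) (P k x) :=
    fun x => LinearMap.ext_iff.mp h2 x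
  -- Part 3
  have h3 : δ (k + 1) ∘ₗ A (k + 1) ∘ₗ P k = 0 := by
    ext v
    simp only [LinearMap.comp_apply, LinearMap.zero_apply, ← h2' v, hδP' (k + 1)]
  have h3' : ∀ x : E (k + 1), δ (k + 1) (A (k + 1) (P k x)) = 0 := by
    intro x
    have := LinearMap.ext_iff.mp h3 x
    simpa using this
  -- Box ∘ P = 0
  have hBoxP : ∀ x : E (k + 1), Box E A δ k (P k x) = 0 := by
    intro x
    simp only [Box, LinearMap.add_apply, LinearMap.comp_apply, hδP' k, map_zero, h3' x,
      add_zero]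
  -- membership in ker Box gives generalized 0-eigenvector
  have hker : ∀ x : E (k + 1), Box E A δ k x = 0 → P k x = x := by
    intro x hx
    refine (hP k).1 x ?_
    rw [Module.End.mem_maxGenEigenspace]
    exact ⟨1, by simpa using hx⟩
  -- Part 4
  have h4 : LinearMap.range (P k) = LinearMap.ker (Box E A δ k) := by
    apply le_antisymm
    · rintro _ ⟨x, rfl⟩
      exact LinearMap.mem_ker.mpr (hBoxP x)
    · intro x hx
      exact ⟨x, hker x (LinearMap.mem_ker.mp hx)⟩
  -- Part 5
  have h5 : LinearMap.ker (Box E A δ k)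
      = LinearMap.ker (δ k) ⊓ LinearMap.ker (δ (k + 1) ∘ₗ A (k + 1)) := by
    ext x
    simp only [LinearMap.mem_ker, Submodule.mem_inf, LinearMap.comp_apply]
    constructor
    · intro hx
      have hx' := hker x hx
      exact ⟨by rw [← hx']; exact hδP' k x, by rw [← hx']; exact h3' x⟩
    · rintro ⟨hx1, hx2⟩
      simp only [Box, LinearMap.add_apply, LinearMap.comp_apply, hx1, hx2, map_zero, add_zero]
  exact ⟨h1, h2, h3, h4, h5⟩
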